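/- Let p ≥ n > d/2 be real, d ≥ 2. For every k ∈ ℤ^d \ {0}, the sum K_{pn}(k) := 4|k|^{2p} Σ_{h ∈ ℤ^d \ {0,k}} |P_{h,k−h}|^2 / (|h|^p |k−h|^n + |h|^n |k−h|^p)^2 is finite, and moreover sup_{k ∈ ℤ^d \ {0}} K_{pn}(k) ≤ 2^{2p+2} ζ_{2n}, where ζ_{2n} := Σ_{h ∈ ℤ^d \ {0}} |h|^{−2n} < ∞. -/

import Mathlib

/-!
Write `A = |h|`, `B = |k - h|` and `D = A^p B^n + A^n B^p`. Since `|k| ≤ A + B` and `p ≥ 1`,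
convexity gives `|k|^p ≤ 2^(p-1) (A^p + B^p)`, and `A^p + B^p ≤ (A^(-n) + B^(-n)) D`. As
`|P_{h,k-h}| ≤ 1`, squaring bounds each term of `4 |k|^(2p) Σ …` by `2^(2p+1) (A^(-2n) + B^(-2n))`.
Summed over `h`, each of `A^(-2n)` and `B^(-2n)` contributes at most `ζ_{2n}`, which is finite
because `ℤ^d` is a lattice of rank `d < 2n` in `ℝ^d`.
-/

open scoped BigOperators
noncomputable section

/-- The lattice point `h ∈ ℤ^d` viewed as a vector of `ℝ^d`. -/
def rvec {d : ℕ} (h : Fin d → ℤ) : EuclideanSpace ℝ (Fin d) :=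
  (WithLp.equiv 2 (Fin d → ℝ)).symm (fun i => (h i : ℝ))

/-- The lattice point `h ∈ ℤ^d` viewed as a vector of `ℂ^d`. -/
def cvec {d : ℕ} (h : Fin d → ℤ) : EuclideanSpace ℂ (Fin d) :=
  (WithLp.equiv 2 (Fin d → ℂ)).symm (fun i => (h i : ℂ))

/-- The bilinear map `P_{hℓ}(a,b) = ((a·ℓ)/|ℓ|) Π_{h+ℓ} b`, where `Π_k` is the (Hermitian)
orthogonal projection of `ℂ^d` onto `k^⊥`. -/
def Phl {d : ℕ} (h ℓ : Fin d → ℤ) (a b : EuclideanSpace ℂ (Fin d)) :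
    EuclideanSpace ℂ (Fin d) :=
  ((∑ i, a i * (ℓ i : ℂ)) / (‖rvec ℓ‖ : ℂ)) •
    ((Submodule.orthogonalProjectionOnto ((ℂ ∙ cvec (h + ℓ))ᗮ) b : (ℂ ∙ cvec (h + ℓ))ᗮ) :
      EuclideanSpace ℂ (Fin d))

/-- The set of admissible constants `Q` for the bilinear map `P_{hℓ}` restricted to
`h^⊥ × ℓ^⊥` (bilinear-dot-product orthogonality with the real vectors `h`, `ℓ`). -/
def bilinSet {d : ℕ} (h ℓ : Fin d → ℤ) : Set ℝ :=
  {Q : ℝ | 0 ≤ Q ∧ ∀ a b : EuclideanSpace ℂ (Fin d),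
    (∑ i, (h i : ℂ) * a i) = 0 → (∑ i, (ℓ i : ℂ) * b i) = 0 →
      ‖Phl h ℓ a b‖ ≤ Q * ‖a‖ * ‖b‖}


/-- The norm of the bilinear map `P_{hℓ}` on `h^⊥ × ℓ^⊥`. -/
def bilinNorm {d : ℕ} (h ℓ : Fin d → ℤ) : ℝ := sInf (bilinSet h ℓ)

/-- Euclidean norm of a lattice point of `ℤ^d`. -/
def latNorm {d : ℕ} (h : Fin d → ℤ) : ℝ := Real.sqrt (∑ i, ((h i : ℝ)) ^ 2)

/-- The general term of the sum defining `K_{pn}(k)` (without the prefactor). -/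
def Kterm {d : ℕ} (p n : ℝ) (k h : Fin d → ℤ) : ℝ :=
  bilinNorm h (k - h) ^ 2 /
    (latNorm h ^ p * latNorm (k - h) ^ n + latNorm h ^ n * latNorm (k - h) ^ p) ^ 2


lemma latNorm_eq_norm_rvec {d : ℕ} (h : Fin d → ℤ) : latNorm h = ‖rvec h‖ := by
  simp [latNorm, EuclideanSpace.norm_eq, rvec]

lemma norm_cvec {d : ℕ} (h : Fin d → ℤ) : ‖cvec h‖ = ‖rvec h‖ := by
  simp [EuclideanSpace.norm_eq, rvec, cvec]

lemma rvec_sub {d : ℕ} (h h' : Fin d → ℤ) : rvec (h - h') = rvec h - rvec h' := by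
  ext i; simp [rvec]

lemma latNorm_nonneg {d : ℕ} (h : Fin d → ℤ) : 0 ≤ latNorm h := Real.sqrt_nonneg _

lemma latNorm_pos {d : ℕ} {h : Fin d → ℤ} (hh : h ≠ 0) : 0 < latNorm h := by
  rw [latNorm_eq_norm_rvec, norm_pos_iff]
  contrapose! hh
  funext i
  simpa [rvec] using congrArg (· i) hh

lemma latNorm_le_add_latNorm_sub {d : ℕ} (k h : Fin d → ℤ) :
    latNorm k ≤ latNorm h + latNorm (k - h) := by
  simpa only [latNorm_eq_norm_rvec, rvec_sub] using norm_le_norm_add_norm_sub' (rvec k) (rvec h)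

lemma summable_latNorm_rpow {d : ℕ} {r : ℝ} (hr : r < -d) :
    Summable (fun h : Fin d → ℤ => latNorm h ^ r) := by
  let b := (EuclideanSpace.basisFun (Fin d) ℝ).toBasis
  let bℤ := b.restrictScalars ℤ
  have hrank : Module.finrank ℤ (Submodule.span ℤ (Set.range b)) = d := by
    simp [Module.finrank_eq_card_basis bℤ]
  have hL := ZLattice.summable_norm_rpow (Submodule.span ℤ (Set.range b)) r (by rwa [hrank])
  have hcoe : ∀ h : Fin d → ℤ, (bℤ.equivFun.symm h : EuclideanSpace ℝ (Fin d)) = rvec h := by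
    intro h
    rw [Module.Basis.equivFun_symm_apply, Submodule.coe_sum]
    simp_rw [Submodule.coe_smul, bℤ, Module.Basis.restrictScalars_apply, b]
    ext i
    simp [rvec, Pi.single_apply]
  refine (bℤ.equivFun.symm.toEquiv.summable_iff.mpr hL).congr fun h => ?_
  simp only [Function.comp_apply, LinearEquiv.coe_toEquiv, Submodule.coe_norm, hcoe,
    latNorm_eq_norm_rvec]

lemma summable_one_div_latNorm_rpow {d : ℕ} {s : ℝ} (hs : d < s) :
    Summable (fun h : {h : Fin d → ℤ // h ≠ 0} => 1 / latNorm (h : Fin d → ℤ) ^ s) :=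
  ((summable_latNorm_rpow (r := -s) (by linarith)).subtype _).congr fun h => by
    rw [Function.comp_apply, Real.rpow_neg (latNorm_nonneg _), one_div]

lemma norm_Phl_le {d : ℕ} (h ℓ : Fin d → ℤ) (a b : EuclideanSpace ℂ (Fin d)) :
    ‖Phl h ℓ a b‖ ≤ ‖a‖ * ‖b‖ := by
  have hinner : ∑ i, a i * (ℓ i : ℂ) = inner ℂ (cvec ℓ) a := by
    simp [PiLp.inner_apply, cvec, mul_comm]
  rw [Phl, norm_smul, Submodule.norm_coe, hinner, norm_div, Complex.norm_real, norm_norm]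
  gcongr
  · exact div_le_of_le_mul₀ (norm_nonneg _) (norm_nonneg _)
      ((norm_inner_le_norm _ _).trans_eq (by rw [norm_cvec, mul_comm]))
  · exact Submodule.norm_orthogonalProjectionOnto_apply_le _ _

lemma one_mem_bilinSet {d : ℕ} (h ℓ : Fin d → ℤ) : (1 : ℝ) ∈ bilinSet h ℓ :=
  ⟨zero_le_one, fun a b _ _ => by rw [one_mul]; exact norm_Phl_le h ℓ a b⟩

lemma bilinNorm_nonneg {d : ℕ} (h ℓ : Fin d → ℤ) : 0 ≤ bilinNorm h ℓ :=
  le_csInf ⟨1, one_mem_bilinSet h ℓ⟩ fun _ hQ => hQ.1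

lemma bilinNorm_le_one {d : ℕ} (h ℓ : Fin d → ℤ) : bilinNorm h ℓ ≤ 1 :=
  csInf_le ⟨0, fun _ hQ => hQ.1⟩ (one_mem_bilinSet h ℓ)

lemma Real.rpow_add_le_mul_rpow_add_rpow {a b : ℝ} (ha : 0 ≤ a) (hb : 0 ≤ b) {p : ℝ}
    (hp : 1 ≤ p) : (a + b) ^ p ≤ 2 ^ (p - 1) * (a ^ p + b ^ p) := by
  lift a to NNReal using ha
  lift b to NNReal using hb
  exact_mod_cast NNReal.rpow_add_le_mul_rpow_add_rpow a b hp

lemma rpow_div_le_two_rpow_mul {p n A B C : ℝ} (hp : 1 ≤ p) (hA : 0 < A) (hB : 0 < B)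
    (hC0 : 0 ≤ C) (hC : C ≤ A + B) :
    C ^ p / (A ^ p * B ^ n + A ^ n * B ^ p) ≤ 2 ^ (p - 1) * (1 / A ^ n + 1 / B ^ n) := by
  have hD : 0 < A ^ p * B ^ n + A ^ n * B ^ p := by positivity
  rw [div_le_iff₀ hD]
  calc C ^ p ≤ (A + B) ^ p := by gcongr
    _ ≤ 2 ^ (p - 1) * (A ^ p + B ^ p) := Real.rpow_add_le_mul_rpow_add_rpow hA.le hB.le hp
    _ ≤ 2 ^ (p - 1) * ((1 / A ^ n + 1 / B ^ n) * (A ^ p * B ^ n + A ^ n * B ^ p)) := by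
        gcongr
        have hexpand : (1 / A ^ n + 1 / B ^ n) * (A ^ p * B ^ n + A ^ n * B ^ p) =
            A ^ p + B ^ p + (A ^ p * B ^ n / A ^ n + A ^ n * B ^ p / B ^ n) := by
          field_simp
          ring
        rw [hexpand]
        exact le_add_of_nonneg_right (by positivity)
    _ = _ := by ring

lemma four_mul_rpow_div_sq_le {p n A B C : ℝ} (hp : 1 ≤ p) (hA : 0 < A) (hB : 0 < B)
    (hC0 : 0 ≤ C) (hC : C ≤ A + B) :
    4 * C ^ (2 * p) / (A ^ p * B ^ n + A ^ n * B ^ p) ^ 2 ≤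
      2 ^ (2 * p + 1) * (1 / A ^ (2 * n) + 1 / B ^ (2 * n)) := by
  have rpow_two_mul : ∀ {x : ℝ} (y : ℝ), 0 ≤ x → x ^ (2 * y) = (x ^ y) ^ 2 := fun y hx => by
    rw [mul_comm, Real.rpow_mul hx, Real.rpow_two]
  calc 4 * C ^ (2 * p) / (A ^ p * B ^ n + A ^ n * B ^ p) ^ 2
      = (2 * (C ^ p / (A ^ p * B ^ n + A ^ n * B ^ p))) ^ 2 := by
        rw [rpow_two_mul p hC0, mul_pow, div_pow]; ring
    _ ≤ (2 * (2 ^ (p - 1) * (1 / A ^ n + 1 / B ^ n))) ^ 2 := by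
        gcongr
        exact rpow_div_le_two_rpow_mul hp hA hB hC0 hC
    _ = (2 ^ p) ^ 2 * (1 / A ^ n + 1 / B ^ n) ^ 2 := by
        rw [Real.rpow_sub_one two_ne_zero]; ring
    _ ≤ (2 ^ p) ^ 2 * (2 * ((1 / A ^ n) ^ 2 + (1 / B ^ n) ^ 2)) := by gcongr; exact add_sq_le
    _ = 2 ^ (2 * p + 1) * (1 / A ^ (2 * n) + 1 / B ^ (2 * n)) := by
        rw [Real.rpow_add_one two_ne_zero, rpow_two_mul p zero_le_two,
          rpow_two_mul n hA.le, rpow_two_mul n hB.le]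
        ring

lemma four_mul_latNorm_rpow_mul_Kterm_le {d : ℕ} {p : ℝ} (n : ℝ) (hp : 1 ≤ p)
    {k h : Fin d → ℤ} (h0 : h ≠ 0) (hk : h ≠ k) :
    4 * latNorm k ^ (2 * p) * Kterm p n k h ≤
      2 ^ (2 * p + 1) * (1 / latNorm h ^ (2 * n) + 1 / latNorm (k - h) ^ (2 * n)) := by
  calc 4 * latNorm k ^ (2 * p) * Kterm p n k h
      ≤ 4 * latNorm k ^ (2 * p) * (1 /
          (latNorm h ^ p * latNorm (k - h) ^ n + latNorm h ^ n * latNorm (k - h) ^ p) ^ 2) := by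
        rw [Kterm]
        have := latNorm_nonneg k
        gcongr
        exact pow_le_one₀ (bilinNorm_nonneg _ _) (bilinNorm_le_one _ _)
    _ ≤ _ := by
        rw [mul_one_div]
        exact four_mul_rpow_div_sq_le hp (latNorm_pos h0) (latNorm_pos (sub_ne_zero.2 hk.symm))
          (latNorm_nonneg k) (latNorm_le_add_latNorm_sub k h)

lemma summable_add_comp_sub_and_tsum_le {G : Type*} [AddGroup G] {f : G → ℝ}
    (hf0 : ∀ g, 0 ≤ f g) (hf : Summable (fun g : {g : G // g ≠ 0} => f g)) (k : G) :
    Summable (fun g : {g : G // g ≠ 0 ∧ g ≠ k} => f g + f (k - g)) ∧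
      ∑' g : {g : G // g ≠ 0 ∧ g ≠ k}, (f g + f (k - g)) ≤ 2 * ∑' g : {g : G // g ≠ 0}, f g := by
  let i₁ : {g : G // g ≠ 0 ∧ g ≠ k} → {g : G // g ≠ 0} := fun g => ⟨g, g.2.1⟩
  let i₂ : {g : G // g ≠ 0 ∧ g ≠ k} → {g : G // g ≠ 0} :=
    fun g => ⟨k - g, sub_ne_zero.2 g.2.2.symm⟩
  have hi₁ : Function.Injective i₁ := fun _ _ hab => Subtype.ext (congrArg Subtype.val hab :)
  have hi₂ : Function.Injective i₂ := fun _ _ hab =>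
    Subtype.ext (sub_right_injective (congrArg Subtype.val hab :))
  have hs₁ := hf.comp_injective hi₁
  have hs₂ := hf.comp_injective hi₂
  refine ⟨hs₁.add hs₂, ?_⟩
  refine (hs₁.tsum_add hs₂).trans_le ?_
  rw [two_mul]
  exact add_le_add (tsum_comp_le_tsum_of_inj hf (fun g => hf0 g) hi₁)
    (tsum_comp_le_tsum_of_inj hf (fun g => hf0 g) hi₂)

lemma summable_and_mul_tsum_le_of_mul_le {ι : Type*} {c : ℝ} {g F : ι → ℝ} (hc : 0 < c)
    (hg : ∀ i, 0 ≤ g i) (hle : ∀ i, c * g i ≤ F i) (hF : Summable F) :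
    Summable g ∧ c * ∑' i, g i ≤ ∑' i, F i := by
  have hgs : Summable g :=
    (hF.mul_left c⁻¹).of_nonneg_of_le hg fun i => (le_inv_mul_iff₀ hc).2 (hle i)
  exact ⟨hgs, tsum_mul_left.symm.trans_le ((hgs.mul_left c).tsum_le_tsum hle hF)⟩

/-- Let `p ≥ n > d/2` (`d ≥ 2`). Then `ζ_{2n} = Σ_{h≠0} |h|^{-2n}` is finite, and for every
`k ∈ ℤ^d \ {0}` the sum defining
`K_{pn}(k) = 4|k|^{2p} Σ_{h ∉ {0,k}} |P_{h,k-h}|² / (|h|^p|k-h|^n + |h|^n|k-h|^p)²`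
is finite and `K_{pn}(k) ≤ 2^{2p+2} ζ_{2n}`. -/
theorem Kpn_finite_and_bounded (d : ℕ) (hd : 2 ≤ d) (p n : ℝ) (hpn : n ≤ p)
    (hn : (d : ℝ) / 2 < n) :
    Summable (fun h : {h : Fin d → ℤ // h ≠ 0} =>
      1 / latNorm (h : Fin d → ℤ) ^ (2 * n)) ∧
    ∀ k : Fin d → ℤ, k ≠ 0 →
      Summable (fun h : {h : Fin d → ℤ // h ≠ 0 ∧ h ≠ k} =>
        Kterm p n k (h : Fin d → ℤ)) ∧
      4 * latNorm k ^ (2 * p) *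
          ∑' h : {h : Fin d → ℤ // h ≠ 0 ∧ h ≠ k}, Kterm p n k (h : Fin d → ℤ) ≤
        2 ^ (2 * p + 2) *
          ∑' h : {h : Fin d → ℤ // h ≠ 0}, 1 / latNorm (h : Fin d → ℤ) ^ (2 * n) := by
  have hp : 1 ≤ p := by
    have : (2 : ℝ) ≤ d := by exact_mod_cast hd
    linarith
  have hζ := summable_one_div_latNorm_rpow (d := d) (s := 2 * n) (by linarith)
  refine ⟨hζ, fun k hk => ?_⟩
  obtain ⟨hF, hFle⟩ := summable_add_comp_sub_and_tsum_le
    (fun h => one_div_nonneg.2 (Real.rpow_nonneg (latNorm_nonneg h) _)) hζ k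
  have hc : 0 < 4 * latNorm k ^ (2 * p) := by have := latNorm_pos hk; positivity
  obtain ⟨hK, hKle⟩ := summable_and_mul_tsum_le_of_mul_le hc
    (fun h => div_nonneg (sq_nonneg _) (sq_nonneg _))
    (fun h => four_mul_latNorm_rpow_mul_Kterm_le n hp h.2.1 h.2.2) (hF.mul_left _)
  refine ⟨hK, hKle.trans ?_⟩
  have htwo : (2 : ℝ) ^ (2 * p + 2) = 2 ^ (2 * p + 1) * 2 := by
    rw [← Real.rpow_add_one two_ne_zero]
    ring_nf
  rw [tsum_mul_left, htwo, mul_assoc]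
  exact mul_le_mul_of_nonneg_left hFle (by positivity)
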